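/- For every rooted tree T, the toric ideal ker φ_{B*_T} ⊆ ℂ[p_⋆, p_ij : 0 ≤ i < j ≤ n] is the extension of the toric ideal ker φ_{B_T} ⊆ ℂ[p_ij : 0 ≤ i < j ≤ n]; that is, ker φ_{B*_T} is generated by the image of ker φ_{B_T} under the natural inclusion of polynomial rings ℂ[p_ij : 0 ≤ i < j ≤ n] ↪ ℂ[p_⋆, p_ij : 0 ≤ i < j ≤ n]. -/

import Mathlib

attribute [local instance] Classical.propDecidable

/-- A rooted tree on leaves `0, …, n`, rooted at the leaf `0`, with all edges directed
away from the root, no vertices of degree two, together with its (uniquely determined)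
most-recent-common-ancestor function `lca` on leaf labels.  The parent map `par` sends
every non-root vertex to the vertex its unique incoming edge comes from, and fixes the
root.  A vertex `u` is a descendant of `v` iff some iterate of `par` sends `u` to `v`. -/
structure PhyloTree where
  n : ℕ
  hn : 1 ≤ n
  V : Type
  fintypeV : Fintype V
  leaf : Fin (n + 1) ↪ V
  par : V → V
  par_root : par (leaf 0) = leaf 0
  par_ne : ∀ v : V, v ≠ leaf 0 → par v ≠ v
  reaches_root : ∀ v : V, ∃ k : ℕ, par^[k] v = leaf 0
  leaf_iff : ∀ v : V, v ≠ leaf 0 → (v ∈ Set.range leaf ↔ ∀ u, par u ≠ v)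
  root_unique_child : ∃! u : V, u ≠ leaf 0 ∧ par u = leaf 0
  no_degree_two : ∀ v : V, v ∉ Set.range leaf → ∃ u w : V, u ≠ w ∧ par u = v ∧ par w = v
  lca : Fin (n + 1) → Fin (n + 1) → V
  lca_anc_left : ∀ i j, ∃ k : ℕ, par^[k] (leaf i) = lca i j
  lca_anc_right : ∀ i j, ∃ k : ℕ, par^[k] (leaf j) = lca i j
  lca_min : ∀ i j (w : V), (∃ k : ℕ, par^[k] (leaf i) = w) →
      (∃ k : ℕ, par^[k] (leaf j) = w) → ∃ k : ℕ, par^[k] (lca i j) = w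

instance (T : PhyloTree) : Fintype T.V := T.fintypeV

/-- `T.isAnc v u` : `v` is an ancestor of `u`, i.e. `u` is a descendant of `v`
(every vertex is a descendant of itself). -/
def PhyloTree.isAnc (T : PhyloTree) (v u : T.V) : Prop := ∃ k : ℕ, T.par^[k] u = v

/-- The 2-element subsets `{i,j}` of `{0, …, n}`, encoded as ordered pairs `i < j`. -/
abbrev PairIdx (n : ℕ) := {q : Fin (n + 1) × Fin (n + 1) // q.1 < q.2}

/-- The non-root vertices of `T`; these index the rows of `A_T`, and are also in
bijection `v ↦ e(v)` with the edges of `T`, so they also index the rows of `B_T`. -/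
abbrev PhyloTree.NR (T : PhyloTree) := {v : T.V // v ≠ T.leaf 0}

/-- The matrix `A_T`, with rows indexed by non-root vertices and columns indexed by
2-element subsets `{i,j}` of `{0, …, n}`: the entry is `1` if `v = i`, `v = j` or
`v = lca(i,j)`, and `0` otherwise. -/
noncomputable def Amat (T : PhyloTree) (R : Type*) [Zero R] [One R] :
    Matrix T.NR (PairIdx T.n) R :=
  Matrix.of fun v s =>
    if v.1 = T.leaf s.1.1 ∨ v.1 = T.leaf s.1.2 ∨ v.1 = T.lca s.1.1 s.1.2 then 1 else 0

/-- `T.onPath v i j` : the edge `e(v)` lies on the unique path between the leaves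
`i` and `j`, i.e. `v` lies strictly below `lca(i,j)` on the segment from `lca(i,j)`
down to `i` or on the segment from `lca(i,j)` down to `j`. -/
def PhyloTree.onPath (T : PhyloTree) (v : T.V) (i j : Fin (T.n + 1)) : Prop :=
  v ≠ T.lca i j ∧ T.isAnc (T.lca i j) v ∧ (T.isAnc v (T.leaf i) ∨ T.isAnc v (T.leaf j))

/-- The matrix `B_T`, with rows indexed by the edges `e(v)` of `T` (equivalently, by the
non-root vertices `v`) and columns indexed by 2-element subsets `{i,j}` of `{0, …, n}`:
the entry is `1` if `e(v) ∈ P(i,j)` and `0` otherwise. -/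
noncomputable def Bmat (T : PhyloTree) (R : Type*) [Zero R] [One R] :
    Matrix T.NR (PairIdx T.n) R :=
  Matrix.of fun v s => if T.onPath v.1 s.1.1 s.1.2 then 1 else 0

/-- The monomial map `φ_M` associated to a nonnegative-integer matrix `M`, sending
`p_c` to `∏_r t_r ^ M(r,c)`. -/
noncomputable def toricMap {R C : Type*} [Fintype R] (M : Matrix R C ℕ) :
    MvPolynomial C ℂ →ₐ[ℂ] MvPolynomial R ℂ :=
  MvPolynomial.aeval fun c => ∏ r : R, MvPolynomial.X r ^ M r c
/-- The matrix `B*_T`, obtained from `B_T` by adjoining a column of all zeros (indexed by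
the symbol `⋆`, here `none`) and then a row of all ones. -/
noncomputable def BstarMat (T : PhyloTree) :
    Matrix (Option T.NR) (Option (PairIdx T.n)) ℕ :=
  Matrix.of fun r c =>
    match r, c with
    | some e, some s => Bmat T ℕ e s
    | some _, none => 0
    | none, _ => 1

/-!
Both `B_T` and `B*_T` define toric ideals spanned by binomials `p^u - p^v` with equal images.
The matrix `B_T` is homogeneous: giving weight one to the pendant edges (the root edge being
the pendant edge of leaf `0`) turns every column into the weight `2`, so the image of a
monomial under `φ_{B_T}` determines its degree. Hence two monomials with the same
`φ_{B*_T}`-image have the same exponent of `p_⋆` and the same `φ_{B_T}`-image of the rest,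
and their difference is `p_⋆^a` times the image of a binomial of `ker φ_{B_T}`; conversely a
binomial of `ker φ_{B_T}` is homogeneous, so it stays in the kernel after adjoining the row
of ones.
-/

open MvPolynomial Matrix

section Toric

variable {R C : Type*} [Fintype R] [Fintype C]

noncomputable def toricExponent (M : Matrix R C ℕ) (u : C →₀ ℕ) : R →₀ ℕ :=
  Finsupp.equivFunOnFinite.symm (M *ᵥ ⇑u)

theorem toricExponent_eq_iff {M : Matrix R C ℕ} {u v : C →₀ ℕ} :
    toricExponent M u = toricExponent M v ↔ M *ᵥ ⇑u = M *ᵥ ⇑v :=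
  Finsupp.equivFunOnFinite.symm.apply_eq_iff_eq

theorem toricMap_monomial (M : Matrix R C ℕ) (u : C →₀ ℕ) (a : ℂ) :
    toricMap M (monomial u a) = monomial (toricExponent M u) a := by
  rw [toricMap, aeval_monomial, monomial_eq, Finsupp.prod_fintype _ _ fun _ => pow_zero _,
    Finsupp.prod_fintype _ _ fun _ => pow_zero _]
  simp_rw [← Finset.prod_pow, ← pow_mul]
  rw [Finset.prod_comm]
  simp_rw [Finset.prod_pow_eq_pow_sum]
  rfl

theorem coeff_toricMap (M : Matrix R C ℕ) (f : MvPolynomial C ℂ) (w : R →₀ ℕ) :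
    (toricMap M f).coeff w =
      ∑ u ∈ f.support, if toricExponent M u = w then f.coeff u else 0 := by
  conv_lhs => rw [f.as_sum]
  simp only [map_sum, toricMap_monomial, coeff_sum, coeff_monomial]

theorem ker_toricMap_le_of_binomial_mem (M : Matrix R C ℕ) {J : Ideal (MvPolynomial C ℂ)}
    (hJ : ∀ u v, toricExponent M u = toricExponent M v → monomial u 1 - monomial v 1 ∈ J) :
    RingHom.ker (toricMap M) ≤ J := by
  intro f hf
  -- Move every monomial of `f` to a fixed representative of its fibre under `toricExponent M`.
  set rep := Function.invFun (toricExponent M) ∘ toricExponent M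
  have hrep : ∀ u, toricExponent M (rep u) = toricExponent M u :=
    fun u => Function.invFun_eq ⟨u, rfl⟩
  have hrep_idem : ∀ u, rep (rep u) = rep u := fun u => congrArg (Function.invFun _) (hrep u)
  set g := ∑ u ∈ f.support, monomial (rep u) (f.coeff u)
  have hg : g = 0 := by
    ext m
    simp only [g, coeff_sum, coeff_monomial, coeff_zero]
    by_cases hm : rep m = m
    · have hfibre : ∀ u, rep u = m ↔ toricExponent M u = toricExponent M m := fun u =>
        ⟨by rintro rfl; exact (hrep u).symm,
          fun h => (congrArg (Function.invFun _) h).trans hm⟩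
      simp only [hfibre]
      rw [← coeff_toricMap, RingHom.mem_ker.mp hf, coeff_zero]
    · exact Finset.sum_eq_zero fun u _ => if_neg fun (h : rep u = m) => hm (h ▸ hrep_idem u)
  have hfg : f - g =
      ∑ u ∈ f.support, MvPolynomial.C (f.coeff u) * (monomial u 1 - monomial (rep u) 1) := by
    conv_lhs => rw [f.as_sum]
    simp only [g, ← Finset.sum_sub_distrib, mul_sub, C_mul_monomial, mul_one]
  have hfgJ : f - g ∈ J :=
    hfg ▸ J.sum_mem fun u _ => J.mul_mem_left _ (hJ u (rep u) (hrep u).symm)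
  simpa [hg] using hfgJ

end Toric

section StarExtension

variable {R C : Type*}

def Matrix.starExtension (M : Matrix R C ℕ) : Matrix (Option R) (Option C) ℕ :=
  Matrix.of fun r c =>
    match r, c with
    | some r, some c => M r c
    | some _, none => 0
    | none, _ => 1

theorem sum_eq_of_mulVec_eq [Fintype R] [Fintype C] {M : Matrix R C ℕ} {w : R → ℕ} {d : ℕ}
    (hd : d ≠ 0) (hw : w ᵥ* M = fun _ => d) {x y : C → ℕ} (h : M *ᵥ x = M *ᵥ y) :
    ∑ c, x c = ∑ c, y c := by
  have hdot : ∀ x : C → ℕ, w ⬝ᵥ (M *ᵥ x) = d * ∑ c, x c := fun x => by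
    rw [dotProduct_mulVec, hw, dotProduct, Finset.mul_sum]
  exact Nat.eq_of_mul_eq_mul_left (Nat.pos_of_ne_zero hd) (by rw [← hdot, ← hdot, h])

theorem starExtension_mulVec_eq_iff [Fintype R] [Fintype C] {M : Matrix R C ℕ} {w : R → ℕ}
    {d : ℕ} (hd : d ≠ 0) (hw : w ᵥ* M = fun _ => d) {x y : Option C → ℕ} :
    M.starExtension *ᵥ x = M.starExtension *ᵥ y ↔
      M *ᵥ (x ∘ some) = M *ᵥ (y ∘ some) ∧ x none = y none := by
  have hsome : ∀ (x : Option C → ℕ) r,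
      (M.starExtension *ᵥ x) (some r) = (M *ᵥ (x ∘ some)) r :=
    fun x r => by simp [mulVec, dotProduct, Fintype.sum_option, Matrix.starExtension]
  have hnone : ∀ x : Option C → ℕ,
      (M.starExtension *ᵥ x) none = x none + ∑ c, x (some c) :=
    fun x => by simp [mulVec, dotProduct, Fintype.sum_option, Matrix.starExtension]
  rw [funext_iff, Option.forall, hnone, hnone, funext_iff]
  simp only [hsome]
  constructor
  · rintro ⟨htotal, hM⟩
    have := sum_eq_of_mulVec_eq hd hw (funext hM)
    exact ⟨hM, by simp only [Function.comp_apply] at this; omega⟩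
  · rintro ⟨hM, hstar⟩
    have := sum_eq_of_mulVec_eq hd hw (funext hM)
    exact ⟨by simp only [Function.comp_apply] at this; omega, hM⟩

theorem monomial_eq_X_none_pow_mul_rename {S : Type*} [CommSemiring S] (u : Option C →₀ ℕ) :
    (monomial u 1 : MvPolynomial (Option C) S) =
      X none ^ u none * rename some (monomial u.some 1) := by
  have hu : u = Finsupp.single none (u none) + Finsupp.mapDomain some u.some := by
    ext (_ | c)
    · simp [Finsupp.mapDomain_of_notMem_range]
    · simp [Finsupp.mapDomain_apply (Option.some_injective C)]
  rw [rename_monomial, X_pow_eq_monomial, monomial_mul, one_mul, ← hu]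

theorem ker_toricMap_starExtension [Fintype R] [Fintype C] {M : Matrix R C ℕ} {w : R → ℕ}
    {d : ℕ} (hd : d ≠ 0) (hw : w ᵥ* M = fun _ => d) :
    RingHom.ker (toricMap M.starExtension) =
      Ideal.map (rename (R := ℂ) some) (RingHom.ker (toricMap M)) := by
  have hexp : ∀ u v : Option C →₀ ℕ,
      toricExponent M.starExtension u = toricExponent M.starExtension v ↔
        toricExponent M u.some = toricExponent M v.some ∧ u none = v none := fun u v => by
    simp only [toricExponent_eq_iff]
    exact starExtension_mulVec_eq_iff hd hw
  apply le_antisymm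
  · refine ker_toricMap_le_of_binomial_mem _ fun u v huv => ?_
    obtain ⟨hsome, hnone⟩ := (hexp u v).1 huv
    have hker : monomial u.some 1 - monomial v.some 1 ∈ RingHom.ker (toricMap M) := by
      rw [RingHom.mem_ker, map_sub, toricMap_monomial, toricMap_monomial, hsome, sub_self]
    rw [monomial_eq_X_none_pow_mul_rename u, monomial_eq_X_none_pow_mul_rename v, hnone,
      ← mul_sub, ← map_sub]
    exact Ideal.mul_mem_left _ _ (Ideal.mem_map_of_mem _ hker)
  · rw [Ideal.map_le_iff_le_comap]
    refine ker_toricMap_le_of_binomial_mem _ fun u v huv => ?_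
    rw [Ideal.mem_comap, map_sub, rename_monomial, rename_monomial, RingHom.mem_ker, map_sub,
      toricMap_monomial, toricMap_monomial, (hexp _ _).2 ?_, sub_self]
    have hsome : ∀ u : C →₀ ℕ, (Finsupp.mapDomain some u).some = u := fun u => by
      ext c
      simp [Finsupp.mapDomain_apply (Option.some_injective C)]
    simp [Finsupp.mapDomain_of_notMem_range, hsome, huv]

end StarExtension

theorem BstarMat_eq_starExtension (T : PhyloTree) :
    BstarMat T = (Bmat T ℕ).starExtension := by
  ext (_ | r) (_ | c) <;> rfl

namespace PhyloTree

variable (T : PhyloTree)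

theorem iterate_par_root (k : ℕ) : T.par^[k] (T.leaf 0) = T.leaf 0 :=
  Function.iterate_fixed T.par_root k

theorem eq_of_isAnc_leaf {m : Fin (T.n + 1)} (hm : m ≠ 0) {v : T.V}
    (h : T.isAnc (T.leaf m) v) : v = T.leaf m := by
  obtain ⟨_ | k, hk⟩ := h
  · exact hk
  · rw [Function.iterate_succ_apply'] at hk
    exact absurd hk ((T.leaf_iff _ (T.leaf.injective.ne hm)).mp ⟨m, rfl⟩ _)

theorem lca_ne_leaf_left {i j : Fin (T.n + 1)} (hi : i ≠ 0) (hij : i ≠ j) :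
    T.lca i j ≠ T.leaf i := fun h =>
  hij (T.leaf.injective (T.eq_of_isAnc_leaf hi (h ▸ T.lca_anc_right i j))).symm

theorem lca_ne_leaf_right {i j : Fin (T.n + 1)} (hj : j ≠ 0) (hij : i ≠ j) :
    T.lca i j ≠ T.leaf j := fun h =>
  hij (T.leaf.injective (T.eq_of_isAnc_leaf hj (h ▸ T.lca_anc_left i j)))

theorem lca_zero_left (j : Fin (T.n + 1)) : T.lca 0 j = T.leaf 0 := by
  obtain ⟨k, hk⟩ := T.lca_anc_left 0 j
  rw [← hk, iterate_par_root]

theorem onPath_leaf_iff {m i j : Fin (T.n + 1)} (hm : m ≠ 0) (hij : i ≠ j) :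
    T.onPath (T.leaf m) i j ↔ m = i ∨ m = j := by
  constructor
  · rintro ⟨-, -, h | h⟩
    · exact Or.inl (T.leaf.injective (T.eq_of_isAnc_leaf hm h)).symm
    · exact Or.inr (T.leaf.injective (T.eq_of_isAnc_leaf hm h)).symm
  · rintro (rfl | rfl)
    · exact ⟨(T.lca_ne_leaf_left hm hij).symm, T.lca_anc_left m j, Or.inl ⟨0, rfl⟩⟩
    · exact ⟨(T.lca_ne_leaf_right hm hij).symm, T.lca_anc_right i m, Or.inr ⟨0, rfl⟩⟩

noncomputable def rootEdge : T.NR :=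
  ⟨T.root_unique_child.choose, T.root_unique_child.choose_spec.1.1⟩

theorem par_rootEdge : T.par T.rootEdge.1 = T.leaf 0 :=
  T.root_unique_child.choose_spec.1.2

theorem eq_rootEdge {v : T.V} (hv : v ≠ T.leaf 0) (h : T.par v = T.leaf 0) :
    v = T.rootEdge.1 :=
  T.root_unique_child.choose_spec.2 v ⟨hv, h⟩

theorem isAnc_rootEdge {v : T.V} (hv : v ≠ T.leaf 0) : T.isAnc T.rootEdge.1 v := by
  have hex := T.reaches_root v
  obtain ⟨k, hk⟩ : ∃ k, Nat.find hex = k + 1 :=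
    Nat.exists_eq_succ_of_ne_zero fun h => hv (by simpa [h] using Nat.find_spec hex)
  refine ⟨k, T.eq_rootEdge (Nat.find_min hex (show k < Nat.find hex by omega)) ?_⟩
  simpa only [hk, Function.iterate_succ_apply'] using Nat.find_spec hex

theorem onPath_rootEdge_iff {i j : Fin (T.n + 1)} (hj : j ≠ 0) :
    T.onPath T.rootEdge.1 i j ↔ i = 0 := by
  refine ⟨fun ⟨hne, ⟨k, hk⟩, _⟩ => ?_, ?_⟩
  · by_contra hi
    -- The only vertex strictly above the root edge is the root, whose only ancestor is itself.
    have hlca : T.lca i j = T.leaf 0 := by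
      obtain _ | k := k
      · exact absurd hk hne
      · rw [← hk, Function.iterate_succ_apply, par_rootEdge, iterate_par_root]
    obtain ⟨m, hm⟩ := T.lca_min i j _ (T.isAnc_rootEdge (T.leaf.injective.ne hi))
      (T.isAnc_rootEdge (T.leaf.injective.ne hj))
    rw [hlca, iterate_par_root] at hm
    exact T.rootEdge.2 hm.symm
  · rintro rfl
    rw [onPath, lca_zero_left]
    exact ⟨T.rootEdge.2, T.reaches_root _, Or.inr (T.isAnc_rootEdge (T.leaf.injective.ne hj))⟩

theorem Bmat_apply (e : T.NR) (s : PairIdx T.n) :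
    Bmat T ℕ e s = if T.onPath e.1 s.1.1 s.1.2 then 1 else 0 := rfl

def leafEdge (k : Fin T.n) : T.NR :=
  ⟨T.leaf k.succ, T.leaf.injective.ne (Fin.succ_ne_zero k)⟩

noncomputable def pendantWeight : T.NR → ℕ :=
  ∑ k : Fin T.n, Pi.single (T.leafEdge k) 1 + Pi.single T.rootEdge 1

theorem pendantWeight_vecMul_Bmat : T.pendantWeight ᵥ* Bmat T ℕ = fun _ => 2 := by
  funext ⟨⟨i, j⟩, hij⟩
  obtain ⟨j, rfl⟩ := Fin.exists_succ_eq.2 (Fin.ne_zero_of_lt hij)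
  simp only [pendantWeight, add_vecMul, sum_vecMul, single_one_vecMul, Pi.add_apply,
    Finset.sum_apply, row_apply, Bmat_apply, leafEdge,
    T.onPath_leaf_iff (Fin.succ_ne_zero _) hij.ne, T.onPath_rootEdge_iff (Fin.succ_ne_zero j)]
  cases i using Fin.cases with
  | zero => simp [Fin.succ_ne_zero]
  | succ i =>
    have hij : i ≠ j := Fin.succ_lt_succ_iff.mp hij |>.ne
    have hsplit : ∀ c : Fin T.n, (if c = i ∨ c = j then 1 else 0 : ℕ) =
        (if c = i then 1 else 0) + (if c = j then 1 else 0) := fun c => by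
      by_cases hci : c = i <;> by_cases hcj : c = j <;> simp_all
    simp [hsplit, Finset.sum_add_distrib]

end PhyloTree

/-- For every rooted tree `T`, the toric ideal `ker φ_{B*_T}` is the extension of the
toric ideal `ker φ_{B_T}` in the polynomial ring with the extra variable `p_⋆`, i.e. it
is generated by the image of `ker φ_{B_T}` under the natural inclusion of polynomial
rings. -/
theorem statement9 (T : PhyloTree) :
    RingHom.ker (toricMap (BstarMat T)) =
      Ideal.map (MvPolynomial.rename (R := ℂ) (some : PairIdx T.n → Option (PairIdx T.n)))
        (RingHom.ker (toricMap (Bmat T ℕ))) := by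
  rw [BstarMat_eq_starExtension]
  exact ker_toricMap_starExtension two_ne_zero T.pendantWeight_vecMul_Bmat
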